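/- Let E(ρ,m,S) = |m|²/(2ρ) + ρe(ρ,S) with ρe(ρ,S) = c_V ρ^γ exp(S/(c_V ρ)), γ > 1. Then the relative energy E(ρ,m,S | ρ̃, ũ, S̃) := (ρ/2)|m/ρ − ũ|² + ρe(ρ,S) − ∂_ρ(ρ̃ e(ρ̃,S̃))(ρ − ρ̃) − ∂_S(ρ̃ e(ρ̃,S̃))(S − S̃) − ρ̃ e(ρ̃,S̃) is nonnegative for all ρ, ρ̃ > 0, m ∈ ℝ^d, ũ ∈ ℝ^d, S, S̃ ∈ ℝ. -/

import Mathlib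

open Real

/-!
Writing `r = ρ / ρ̃` and `u = S / (c_V ρ) - S̃ / (c_V ρ̃)`, the energy factors as
`ρe(ρ, S) = ρ̃e(ρ̃, S̃) · r^γ e^u`, while its tangent plane at `(ρ̃, S̃)` evaluated at `(ρ, S)` is
`ρ̃e(ρ̃, S̃) · (1 + γ (r - 1) + r u)`. So the relative energy is the nonnegative kinetic term plus
`ρ̃e(ρ̃, S̃)` times `r^γ e^u - (1 + γ (r - 1) + r u)`, which is nonnegative because
`r^γ e^u = r e^{(γ-1) log r + u} ≥ r ((γ - 1) log r + u + 1)` and `r log r ≥ r - 1`.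
-/

lemma one_add_mul_sub_one_add_mul_le_rpow_mul_exp {γ r : ℝ} (hγ : 1 ≤ γ) (hr : 0 < r) (u : ℝ) :
    1 + γ * (r - 1) + r * u ≤ r ^ γ * exp u := by
  have h_factor : r ^ γ * exp u = r * exp ((γ - 1) * log r + u) := by
    rw [rpow_def_of_pos hr, ← exp_add, ← exp_log hr, ← exp_add, log_exp]
    ring_nf
  have h_exp := mul_le_mul_of_nonneg_left (add_one_le_exp ((γ - 1) * log r + u)) hr.le
  have h_log := mul_le_mul_of_nonneg_left (self_sub_one_le_mul_log hr.le) (sub_nonneg.2 hγ)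
  rw [h_factor]
  nlinarith

noncomputable def internalEnergy (cV γ ρ S : ℝ) : ℝ :=
  cV * ρ ^ γ * exp (S / (cV * ρ))

section internalEnergy

variable {cV γ : ℝ}

lemma internalEnergy_eq_mul_rpow_mul_exp (hcV : cV ≠ 0) {ρ ρt : ℝ} (hρ : 0 < ρ) (hρt : 0 < ρt)
    (S St : ℝ) :
    internalEnergy cV γ ρ S = internalEnergy cV γ ρt St *
      ((ρ / ρt) ^ γ * exp (S / (cV * ρ) - St / (cV * ρt))) := by
  unfold internalEnergy
  rw [div_rpow hρ.le hρt.le, exp_sub]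
  field_simp

lemma hasDerivAt_internalEnergy_density (hcV : cV ≠ 0) {ρ : ℝ} (hρ : 0 < ρ) (S : ℝ) :
    HasDerivAt (fun r => internalEnergy cV γ r S)
      ((γ - S / (cV * ρ)) * internalEnergy cV γ ρ S / ρ) ρ := by
  have h_quot : HasDerivAt (fun r => S / (cV * r)) (-(S * cV) / (cV * ρ) ^ 2) ρ := by
    simpa using (hasDerivAt_const ρ S).fun_div ((hasDerivAt_id ρ).const_mul cV)
      (mul_ne_zero hcV hρ.ne')
  have h := ((hasDerivAt_rpow_const (p := γ) (Or.inl hρ.ne')).const_mul cV).mul h_quot.exp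
  refine h.congr_deriv ?_
  unfold internalEnergy
  rw [rpow_sub_one hρ.ne']
  field_simp
  ring

lemma hasDerivAt_internalEnergy_entropy (ρ S : ℝ) :
    HasDerivAt (fun s => internalEnergy cV γ ρ s) (internalEnergy cV γ ρ S / (cV * ρ)) S := by
  have h := (((hasDerivAt_id S).div_const (cV * ρ)).exp).const_mul (cV * ρ ^ γ)
  refine h.congr_deriv ?_
  simp only [internalEnergy, id]
  ring

/-- Tangent-plane inequality; the two coefficients are `∂_ρ` and `∂_S` of the energy at `(ρt, St)`. -/
lemma internalEnergy_tangent_le (hcV : 0 < cV) (hγ : 1 ≤ γ) {ρ ρt : ℝ} (hρ : 0 < ρ)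
    (hρt : 0 < ρt) (S St : ℝ) :
    internalEnergy cV γ ρt St
        + (γ - St / (cV * ρt)) * internalEnergy cV γ ρt St / ρt * (ρ - ρt)
        + internalEnergy cV γ ρt St / (cV * ρt) * (S - St)
      ≤ internalEnergy cV γ ρ S := by
  set u := S / (cV * ρ) - St / (cV * ρt)
  have h_tangent : internalEnergy cV γ ρt St
        + (γ - St / (cV * ρt)) * internalEnergy cV γ ρt St / ρt * (ρ - ρt)
        + internalEnergy cV γ ρt St / (cV * ρt) * (S - St)
      = internalEnergy cV γ ρt St * (1 + γ * (ρ / ρt - 1) + ρ / ρt * u) := by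
    simp only [u]
    field_simp
    ring
  have h_pos : 0 ≤ internalEnergy cV γ ρt St := by unfold internalEnergy; positivity
  rw [h_tangent, internalEnergy_eq_mul_rpow_mul_exp hcV.ne' hρ hρt S St]
  exact mul_le_mul_of_nonneg_left
    (one_add_mul_sub_one_add_mul_le_rpow_mul_exp hγ (div_pos hρ hρt) u) h_pos

end internalEnergy

theorem relative_energy_nonneg_general
    (d : ℕ)
    (γ : ℝ) (hγ : 1 < γ) (cV : ℝ) (hcV : cV = 1 / (γ - 1))
    (H : ℝ → ℝ → ℝ)
    (hH : ∀ ρ S : ℝ, H ρ S = cV * ρ ^ γ * Real.exp (S / (cV * ρ)))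
    (ρ ρt : ℝ) (hρ : 0 < ρ) (hρt : 0 < ρt)
    (m ut : EuclideanSpace ℝ (Fin d)) (S St : ℝ)
    (Hρ HS : ℝ)
    (hHρ : HasDerivAt (fun r => H r St) Hρ ρt)
    (hHS : HasDerivAt (fun s => H ρt s) HS St) :
    0 ≤ ρ / 2 * ‖(ρ⁻¹ • m : EuclideanSpace ℝ (Fin d)) - ut‖ ^ 2 + H ρ S
        - Hρ * (ρ - ρt) - HS * (S - St) - H ρt St := by
  have hcV_pos : 0 < cV := by rw [hcV]; exact one_div_pos.2 (sub_pos.2 hγ)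
  obtain rfl : H = internalEnergy cV γ := funext₂ hH
  have hHρ_eq := hHρ.unique (hasDerivAt_internalEnergy_density hcV_pos.ne' hρt St)
  have hHS_eq := hHS.unique (hasDerivAt_internalEnergy_entropy ρt St)
  have h_tangent := internalEnergy_tangent_le hcV_pos hγ.le hρ hρt S St
  have h_kinetic : 0 ≤ ρ / 2 * ‖(ρ⁻¹ • m : EuclideanSpace ℝ (Fin d)) - ut‖ ^ 2 := by positivity
  rw [hHρ_eq, hHS_eq]
  linarith

theorem relative_energy_nonneg
    (d : ℕ) (hd : 1 ≤ d)
    (γ : ℝ) (hγ : 1 < γ) (cV : ℝ) (hcV : cV = 1 / (γ - 1))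
    (H : ℝ → ℝ → ℝ)
    (hH : ∀ ρ S : ℝ, H ρ S = cV * ρ ^ γ * Real.exp (S / (cV * ρ)))
    (ρ ρt : ℝ) (hρ : 0 < ρ) (hρt : 0 < ρt)
    (m ut : EuclideanSpace ℝ (Fin d)) (S St : ℝ)
    (Hρ HS : ℝ)
    (hHρ : HasDerivAt (fun r => H r St) Hρ ρt)
    (hHS : HasDerivAt (fun s => H ρt s) HS St) :
    0 ≤ ρ / 2 * ‖(ρ⁻¹ • m : EuclideanSpace ℝ (Fin d)) - ut‖ ^ 2 + H ρ S
        - Hρ * (ρ - ρt) - HS * (S - St) - H ρt St :=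
  relative_energy_nonneg_general d γ hγ cV hcV H hH ρ ρt hρ hρt m ut S St Hρ HS hHρ hHS
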